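/- arXiv:0810.0575 — 2 statements merged into one kernel-verified Lean document; each statement's English description precedes it below -/
import Mathlib

section
/- Let V be an n-dimensional complex vector space with a Hermitian inner product, and suppose φ ∈ ⋀^{r+1} V* is a complex r-fold vector cross product, i.e. ‖ι_{e₁∧⋯∧e_r} φ‖ = 1 for all orthonormal r-tuples (e₁,…,e_r) in V. Then either r = 1 and n is even, or r = n-1. -/
open Module

/-- Interior contraction of an alternating `(r+1)`-form `φ` by the `r`-vector
`e₁ ∧ ⋯ ∧ e_r`, as a continuous linear functional `v ↦ φ (e₁, …, e_r, v)` on `V`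
(whose norm is the dual norm induced by the Hermitian metric). -/
noncomputable def contraction {V : Type*} [NormedAddCommGroup V] [InnerProductSpace ℂ V]
    [FiniteDimensional ℂ V] {r : ℕ} (φ : V [⋀^Fin (r + 1)]→ₗ[ℂ] ℂ) (e : Fin r → V) :
    V →L[ℂ] ℂ :=
  LinearMap.toContinuousLinearMap (φ.toMultilinearMap.toLinearMap (Fin.snoc e 0) (Fin.last r))

/-- `φ ∈ ⋀^{r+1} V*` is a complex `r`-fold vector cross product if
`‖ι_{e₁ ∧ ⋯ ∧ e_r} φ‖ = 1` for every orthonormal family `e₁, …, e_r`. -/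
def IsCrossProduct {V : Type*} [NormedAddCommGroup V] [InnerProductSpace ℂ V]
    [FiniteDimensional ℂ V] {r : ℕ} (φ : V [⋀^Fin (r + 1)]→ₗ[ℂ] ℂ) : Prop :=
  ∀ e : Fin r → V, Orthonormal ℂ e → ‖contraction φ e‖ = 1

/-!
For `r = 1` the bilinear form `(x, y) ↦ φ (x, y)` is skew and nondegenerate (since
`‖ι_x φ‖ = ‖x‖`), so its Gram matrix is an invertible skew-symmetric matrix and `n` is even.

For `r ≥ 2`, contracting `φ` with a unit vector `e` and restricting to `e^⊥` turns an `r`-fold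
cross product on `V` into an `(r - 1)`-fold one on `e^⊥`, so it suffices to show that a 2-fold
cross product forces `n ≤ 3`. Let `X (u, v)` be the Riesz vector of `φ (u, v, ·)`. The
normalisation gives `‖X (u, v)‖² = ‖u‖²‖v‖² - |⟪u, v⟫|²`, and polarising in both arguments
gives the Gram identity `⟪X (a, x), X (b, y)⟫ = ⟪b, a⟫⟪y, x⟫ - ⟪y, a⟫⟪b, x⟫`. If `n ≥ 4`, take
nonzero `u ⟂ v` and a nonzero `b` orthogonal to `u`, `v` and `z = X (u, v)`. Then
`‖X (b, z)‖² = ‖b‖²‖z‖² ≠ 0`, whereas alternation and the Gram identity give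
`‖X (b, z)‖² = -⟪X (b, X (b, z)), X (u, v)⟫ = 0`.
-/

open scoped InnerProductSpace ComplexConjugate

theorem LinearMap.IsAlt.eq_zero {M : Type*} [AddCommGroup M] [Module ℂ M]
    {B : M →ₗ[ℂ] M →ₗ⋆[ℂ] ℂ} (hB : B.IsAlt) : B = 0 := by
  ext x y
  have h := hB.neg x y
  have hI := hB.neg x (Complex.I • y)
  simp only [map_smul, LinearMap.map_smulₛₗ, LinearMap.smul_apply, smul_eq_mul,
    Complex.conj_I] at hI
  have : 2 * Complex.I * B x y = 0 := by linear_combination hI - Complex.I * h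
  simpa using this

theorem LinearMap.BilinForm.Nondegenerate.even_finrank {K M : Type*} [Field K] [NeZero (2 : K)]
    [AddCommGroup M] [Module K M] [FiniteDimensional K M] {B : LinearMap.BilinForm K M}
    (hB : B.Nondegenerate) (hskew : ∀ x y, B x y = -B y x) : Even (finrank K M) := by
  set b := Module.finBasis K M
  set A := LinearMap.BilinForm.toMatrix b B
  have hdet : A.det ≠ 0 := (LinearMap.BilinForm.nondegenerate_iff_det_ne_zero b).mp hB
  have hA : A.transpose = -A := by
    ext i j
    simp [A, LinearMap.BilinForm.toMatrix_apply, hskew (b j)]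
  have hpow : (-1 : K) ^ finrank K M = 1 := by
    have := congrArg Matrix.det hA
    rw [Matrix.det_transpose, Matrix.det_neg, Fintype.card_fin] at this
    exact (mul_eq_right₀ hdet).mp this.symm
  exact (neg_one_pow_eq_one_iff_even fun h => NeZero.ne (2 : K) (by linear_combination -h)).mp hpow

section InnerProductSpace

variable {V : Type*} [NormedAddCommGroup V] [InnerProductSpace ℂ V]

lemma orthonormal_inv_norm_smul {ι : Type*} {v : ι → V}
    (hv : Pairwise fun i j => ⟪v i, v j⟫_ℂ = 0) (h0 : ∀ i, v i ≠ 0) :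
    Orthonormal ℂ fun i => (‖v i‖⁻¹ : ℂ) • v i :=
  ⟨fun i => norm_smul_inv_norm (h0 i), fun i j hij => by
    simp [inner_smul_left, inner_smul_right, hv hij]⟩

lemma Orthonormal.fin_cons {m : ℕ} {g : Fin m → V} (hg : Orthonormal ℂ g) {x : V}
    (hx : ‖x‖ = 1) (hxg : ∀ i, ⟪x, g i⟫_ℂ = 0) :
    Orthonormal ℂ (Fin.cons x g : Fin (m + 1) → V) := by
  refine ⟨Fin.cases hx hg.1, ?_⟩
  intro i j hij
  cases i using Fin.cases <;> cases j using Fin.cases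
  · exact absurd rfl hij
  · simpa using hxg _
  · simpa using inner_eq_zero_symm.mp (hxg _)
  · simpa using hg.2 (fun h => hij (congrArg Fin.succ h))

lemma ContinuousLinearMap.norm_comp_subtypeL_of_orthogonal {F : Type*} [NormedAddCommGroup F]
    [NormedSpace ℂ F] (K : Submodule ℂ V) [K.HasOrthogonalProjection] (f : V →L[ℂ] F)
    (hf : ∀ x ∈ Kᗮ, f x = 0) : ‖f.comp K.subtypeL‖ = ‖f‖ := by
  refine le_antisymm ((f.opNorm_comp_le _).trans
    (mul_le_of_le_one_right (norm_nonneg _) K.norm_subtypeL_le))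
    (f.opNorm_le_bound (norm_nonneg (f.comp K.subtypeL)) fun x => ?_)
  have hx : f x = f.comp K.subtypeL (K.orthogonalProjectionOnto x) := by
    rw [← sub_eq_zero, comp_apply, Submodule.subtypeL_apply, ← K.starProjection_apply, ← map_sub]
    exact hf _ (K.sub_starProjection_mem_orthogonal x)
  rw [hx]
  exact (le_opNorm _ _).trans
    (mul_le_mul_of_nonneg_left (K.norm_orthogonalProjectionOnto_apply_le x) (norm_nonneg _))

variable [FiniteDimensional ℂ V]

lemma exists_ne_zero_forall_inner_eq_zero {m : ℕ} (f : Fin m → V) (hm : m < finrank ℂ V) :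
    ∃ b ≠ 0, ∀ i, ⟪f i, b⟫_ℂ = 0 := by
  set K := Submodule.span ℂ (Set.range f)
  have hK : Kᗮ ≠ ⊥ := by
    rw [Ne, Submodule.orthogonal_eq_bot_iff]
    intro h
    have : finrank ℂ K ≤ m := (finrank_range_le_card (R := ℂ) f).trans_eq (Fintype.card_fin m)
    rw [h, finrank_top] at this
    omega
  obtain ⟨b, hb, hb0⟩ := Submodule.exists_mem_ne_zero_of_ne_bot hK
  exact ⟨b, hb0, fun i => Submodule.inner_right_of_mem_orthogonal
    (Submodule.subset_span (Set.mem_range_self i)) hb⟩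

@[simp]
lemma contraction_apply {r : ℕ} (φ : V [⋀^Fin (r + 1)]→ₗ[ℂ] ℂ) (e : Fin r → V) (w : V) :
    contraction φ e w = φ (Fin.snoc e w) := by
  simp [contraction, MultilinearMap.toLinearMap, Fin.update_snoc_last]

theorem IsCrossProduct.norm_contraction {r : ℕ} {φ : V [⋀^Fin (r + 1)]→ₗ[ℂ] ℂ}
    (hφ : IsCrossProduct φ) {e : Fin r → V} (he : Pairwise fun i j => ⟪e i, e j⟫_ℂ = 0) :
    ‖contraction φ e‖ = ∏ i, ‖e i‖ := by
  by_cases h0 : ∃ i, e i = 0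
  · obtain ⟨i, hi⟩ := h0
    have : contraction φ e = 0 := by
      ext w
      simpa using φ.map_coord_zero (Fin.castSucc i) (by simp [hi])
    rw [this, norm_zero, Finset.prod_eq_zero (Finset.mem_univ i) (by simp [hi])]
  push Not at h0
  set e₀ : Fin r → V := fun i => (‖e i‖⁻¹ : ℂ) • e i
  have he₀ : e = fun i => (‖e i‖ : ℂ) • e₀ i := by
    funext i
    have : (‖e i‖ : ℂ) ≠ 0 := by exact_mod_cast norm_ne_zero_iff.mpr (h0 i)
    simp [e₀, smul_smul, mul_inv_cancel₀ this]
  have hscale : contraction φ e = (∏ i, (‖e i‖ : ℂ)) • contraction φ e₀ := by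
    ext w
    have : (Fin.snoc e w : Fin (r + 1) → V) = fun j =>
        (Fin.snoc (fun i => (‖e i‖ : ℂ)) 1 : Fin (r + 1) → ℂ) j •
          (Fin.snoc e₀ w : Fin (r + 1) → V) j := by
      funext j
      induction j using Fin.lastCases with
      | last => simp
      | cast j => simpa using congrFun he₀ j
    simp [this, AlternatingMap.map_smul_univ, Fin.prod_univ_castSucc]
  rw [hscale, norm_smul, hφ e₀ (orthonormal_inv_norm_smul he h0), mul_one]
  simp

theorem IsCrossProduct.curryLeft_compLinearMap_orthogonal {r : ℕ}
    {φ : V [⋀^Fin (r + 2)]→ₗ[ℂ] ℂ} (hφ : IsCrossProduct φ) {e : V} (he : ‖e‖ = 1) :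
    IsCrossProduct ((φ.curryLeft e).compLinearMap (ℂ ∙ e)ᗮ.subtype) := by
  intro g hg
  set t : Fin (r + 1) → V := Fin.cons e ((ℂ ∙ e)ᗮ.subtype ∘ g)
  have hcomp : contraction ((φ.curryLeft e).compLinearMap (ℂ ∙ e)ᗮ.subtype) g
      = (contraction φ t).comp (ℂ ∙ e)ᗮ.subtypeL := by
    ext x
    simp only [contraction_apply, AlternatingMap.compLinearMap_apply,
      AlternatingMap.curryLeft_apply_apply, ContinuousLinearMap.comp_apply,
      Submodule.subtypeL_apply, t, ← Fin.cons_snoc_eq_snoc_cons]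
    congr 1
    funext i
    refine Fin.cases rfl (fun i => ?_) i
    induction i using Fin.lastCases with
    | last => rw [Matrix.cons_val_succ]; simp
    | cast i => simp
  have ht : Orthonormal ℂ t := (hg.comp_linearIsometry (ℂ ∙ e)ᗮ.subtypeₗᵢ).fin_cons he
    fun i => Submodule.mem_orthogonal_singleton_iff_inner_right.mp (g i).2
  rw [hcomp, ContinuousLinearMap.norm_comp_subtypeL_of_orthogonal _ _ ?_, hφ t ht]
  intro x hx
  rw [Submodule.orthogonal_orthogonal] at hx
  obtain ⟨c, rfl⟩ := Submodule.mem_span_singleton.mp hx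
  rw [map_smul, contraction_apply,
    φ.map_eq_zero_of_eq (i := 0) (j := Fin.last (r + 1)) _ (by simp [t]) (by simp), smul_zero]

theorem IsCrossProduct.even_finrank {φ : V [⋀^Fin 2]→ₗ[ℂ] ℂ} (hφ : IsCrossProduct φ) :
    Even (finrank ℂ V) := by
  let B : LinearMap.BilinForm ℂ V := LinearMap.mk₂ ℂ (fun x y => contraction φ ![x] y)
    (fun _ _ _ => by simp [AlternatingMap.map_vecCons_add])
    (fun _ _ _ => by simp [AlternatingMap.map_vecCons_smul])
    (fun _ _ _ => map_add _ _ _)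
    (fun _ _ _ => map_smul _ _ _)
  refine LinearMap.BilinForm.Nondegenerate.even_finrank (B := B)
    (.ofSeparatingLeft fun x hx => ?_) fun x y => ?_
  · have hnorm := hφ.norm_contraction (e := ![x]) Subsingleton.pairwise
    rw [show contraction φ ![x] = 0 from ContinuousLinearMap.ext hx] at hnorm
    simpa [eq_comm] using hnorm
  · simp only [B, LinearMap.mk₂_apply, contraction_apply]
    rw [← φ.map_swap _ (i := 0) (j := 1) (by decide)]
    congr 1
    funext i
    fin_cases i <;> rfl

noncomputable def crossVec (φ : V [⋀^Fin 3]→ₗ[ℂ] ℂ) : V →ₗ⋆[ℂ] V →ₗ⋆[ℂ] V :=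
  LinearMap.mk₂'ₛₗ (starRingEnd ℂ) (starRingEnd ℂ)
    (fun u v => (InnerProductSpace.toDual ℂ V).symm (contraction φ ![u, v]))
    (fun u u' v => ext_inner_right ℂ fun w => by
      simp [inner_add_left, AlternatingMap.map_vecCons_add])
    (fun c u v => ext_inner_right ℂ fun w => by
      simp [inner_smul_left, AlternatingMap.map_vecCons_smul])
    (fun u v v' => ext_inner_right ℂ fun w => by
      simp [inner_add_left, ← AlternatingMap.curryLeft_apply_apply])
    (fun c u v => ext_inner_right ℂ fun w => by
      simp [inner_smul_left, ← AlternatingMap.curryLeft_apply_apply])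

section CrossVec

variable (φ : V [⋀^Fin 3]→ₗ[ℂ] ℂ)

lemma inner_crossVec (u v w : V) : ⟪crossVec φ u v, w⟫_ℂ = φ ![u, v, w] := by
  simp [crossVec]

lemma crossVec_self (u : V) : crossVec φ u u = 0 :=
  ext_inner_right ℂ fun w => by
    rw [inner_crossVec, inner_zero_left]
    exact φ.map_eq_zero_of_eq (i := 0) (j := 1) _ rfl (by decide)

lemma inner_crossVec_swap (u v w : V) : ⟪crossVec φ u v, w⟫_ℂ = -⟪crossVec φ u w, v⟫_ℂ := by
  rw [inner_crossVec, inner_crossVec, ← φ.map_swap _ (i := 1) (j := 2) (by decide)]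
  congr 1
  funext i
  fin_cases i <;> rfl

variable {φ}

lemma IsCrossProduct.inner_crossVec_self_of_inner_eq_zero (hφ : IsCrossProduct φ) {u v : V}
    (huv : ⟪u, v⟫_ℂ = 0) : ⟪crossVec φ u v, crossVec φ u v⟫_ℂ = ⟪u, u⟫_ℂ * ⟪v, v⟫_ℂ := by
  have hpair : Pairwise fun i j => ⟪![u, v] i, ![u, v] j⟫_ℂ = 0 := by
    intro i j hij
    fin_cases i <;> fin_cases j <;> simp_all [inner_eq_zero_symm]
  have hnorm : ‖crossVec φ u v‖ = ‖u‖ * ‖v‖ := by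
    simpa [crossVec, Fin.prod_univ_two] using hφ.norm_contraction hpair
  simp only [inner_self_eq_norm_sq_to_K, hnorm]
  push_cast
  ring

lemma IsCrossProduct.inner_crossVec_self (hφ : IsCrossProduct φ) (u v : V) :
    ⟪crossVec φ u v, crossVec φ u v⟫_ℂ = ⟪u, u⟫_ℂ * ⟪v, v⟫_ℂ - ⟪v, u⟫_ℂ * ⟪u, v⟫_ℂ := by
  rcases eq_or_ne u 0 with rfl | hu
  · simp
  have huu : ⟪u, u⟫_ℂ ≠ 0 := inner_self_ne_zero.mpr hu
  set c := ⟪u, v⟫_ℂ / ⟪u, u⟫_ℂ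
  have hv' : ⟪u, v - c • u⟫_ℂ = 0 := by
    rw [inner_sub_right, inner_smul_right, div_mul_cancel₀ _ huu, sub_self]
  have hX : crossVec φ u v = crossVec φ u (v - c • u) := by
    simp [crossVec_self]
  rw [hX, hφ.inner_crossVec_self_of_inner_eq_zero hv']
  have hc : conj c = ⟪v, u⟫_ℂ / ⟪u, u⟫_ℂ := by simp [c]
  simp only [inner_sub_left, inner_sub_right, inner_smul_left, inner_smul_right, hc]
  field_simp
  ring

lemma IsCrossProduct.inner_crossVec_crossVec_same_right (hφ : IsCrossProduct φ) (x a b : V) :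
    ⟪crossVec φ a x, crossVec φ b x⟫_ℂ = ⟪b, a⟫_ℂ * ⟪x, x⟫_ℂ - ⟪x, a⟫_ℂ * ⟪b, x⟫_ℂ := by
  let B : V →ₗ[ℂ] V →ₗ⋆[ℂ] ℂ := LinearMap.mk₂'ₛₗ (RingHom.id ℂ) (starRingEnd ℂ)
    (fun a b => ⟪crossVec φ a x, crossVec φ b x⟫_ℂ - (⟪b, a⟫_ℂ * ⟪x, x⟫_ℂ - ⟪x, a⟫_ℂ * ⟪b, x⟫_ℂ))
    (fun _ _ _ => by simp only [map_add, LinearMap.add_apply, inner_add_left, inner_add_right]; ring)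
    (fun _ _ _ => by
      simp only [LinearMap.map_smulₛₗ, LinearMap.smul_apply, inner_smul_left, inner_smul_right,
        Complex.conj_conj, RingHom.id_apply]
      ring)
    (fun _ _ _ => by simp only [map_add, LinearMap.add_apply, inner_add_left, inner_add_right]; ring)
    (fun _ _ _ => by
      simp only [LinearMap.map_smulₛₗ, LinearMap.smul_apply, inner_smul_left, inner_smul_right]
      ring)
  have hB : B = 0 := LinearMap.IsAlt.eq_zero fun a => by
    simp only [B, LinearMap.mk₂'ₛₗ_apply, hφ.inner_crossVec_self, sub_self]
  exact sub_eq_zero.mp congr($hB a b)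

lemma IsCrossProduct.inner_crossVec_crossVec (hφ : IsCrossProduct φ) (a x b y : V) :
    ⟪crossVec φ a x, crossVec φ b y⟫_ℂ = ⟪b, a⟫_ℂ * ⟪y, x⟫_ℂ - ⟪y, a⟫_ℂ * ⟪b, x⟫_ℂ := by
  let B : V →ₗ[ℂ] V →ₗ⋆[ℂ] ℂ := LinearMap.mk₂'ₛₗ (RingHom.id ℂ) (starRingEnd ℂ)
    (fun x y => ⟪crossVec φ a x, crossVec φ b y⟫_ℂ - (⟪b, a⟫_ℂ * ⟪y, x⟫_ℂ - ⟪y, a⟫_ℂ * ⟪b, x⟫_ℂ))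
    (fun _ _ _ => by simp only [map_add, inner_add_left, inner_add_right]; ring)
    (fun _ _ _ => by
      simp only [LinearMap.map_smulₛₗ, inner_smul_left, inner_smul_right, Complex.conj_conj,
        RingHom.id_apply]
      ring)
    (fun _ _ _ => by simp only [map_add, inner_add_left, inner_add_right]; ring)
    (fun _ _ _ => by simp only [LinearMap.map_smulₛₗ, inner_smul_left, inner_smul_right]; ring)
  have hB : B = 0 := LinearMap.IsAlt.eq_zero fun x => by
    simp only [B, LinearMap.mk₂'ₛₗ_apply, hφ.inner_crossVec_crossVec_same_right, sub_self]
  exact sub_eq_zero.mp congr($hB x y)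

theorem IsCrossProduct.finrank_le_three (hφ : IsCrossProduct φ) : finrank ℂ V ≤ 3 := by
  by_contra! hV
  obtain ⟨u, hu, -⟩ := exists_ne_zero_forall_inner_eq_zero (![] : Fin 0 → V) (by omega)
  obtain ⟨v, hv, huv⟩ := exists_ne_zero_forall_inner_eq_zero ![u] (by omega)
  replace huv : ⟪u, v⟫_ℂ = 0 := huv 0
  obtain ⟨b, hb, hbuvz⟩ := exists_ne_zero_forall_inner_eq_zero ![u, v, crossVec φ u v] hV
  obtain ⟨hub, hvb, hzb⟩ : ⟪u, b⟫_ℂ = 0 ∧ ⟪v, b⟫_ℂ = 0 ∧ ⟪crossVec φ u v, b⟫_ℂ = 0 :=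
    ⟨hbuvz 0, hbuvz 1, hbuvz 2⟩
  have hz : crossVec φ u v ≠ 0 := by
    rw [← inner_self_ne_zero (𝕜 := ℂ), hφ.inner_crossVec_self_of_inner_eq_zero huv]
    exact mul_ne_zero (inner_self_ne_zero.mpr hu) (inner_self_ne_zero.mpr hv)
  have hnorm := hφ.inner_crossVec_self_of_inner_eq_zero (inner_eq_zero_symm.mp hzb)
  rw [inner_crossVec_swap, hφ.inner_crossVec_crossVec, hub, hvb] at hnorm
  simp [hb, hz] at hnorm

end CrossVec

theorem IsCrossProduct.finrank_le {k : ℕ} {φ : V [⋀^Fin (k + 3)]→ₗ[ℂ] ℂ}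
    (hφ : IsCrossProduct φ) : finrank ℂ V ≤ k + 3 := by
  induction k generalizing V with
  | zero => exact hφ.finrank_le_three
  | succ k ih =>
    rcases Nat.eq_zero_or_pos (finrank ℂ V) with hV | hV
    · omega
    have := nontrivial_of_finrank_pos hV
    obtain ⟨e, he⟩ := exists_norm_eq V zero_le_one
    have hK := ih (hφ.curryLeft_compLinearMap_orthogonal he)
    have := Submodule.finrank_add_finrank_orthogonal (ℂ ∙ e)
    rw [finrank_span_singleton (norm_ne_zero_iff.mp (he ▸ one_ne_zero))] at this
    omega

end InnerProductSpace

/-- If an `n`-dimensional complex Hermitian vector space carries a complex `r`-fold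
vector cross product with `1 ≤ r ≤ n - 1`, then either `r = 1` and `n` is even,
or `r = n - 1`. -/
theorem stmt_6 (n r : ℕ) (hr1 : 1 ≤ r) (hr2 : r ≤ n - 1)
    (V : Type*) [NormedAddCommGroup V] [InnerProductSpace ℂ V] [FiniteDimensional ℂ V]
    (hn : finrank ℂ V = n)
    (φ : V [⋀^Fin (r + 1)]→ₗ[ℂ] ℂ) (hφ : IsCrossProduct φ) :
    (r = 1 ∧ Even n) ∨ r = n - 1 := by
  subst hn
  rcases Nat.lt_or_ge r 2 with hr | hr
  · obtain rfl : r = 1 := by omega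
    exact Or.inl ⟨rfl, hφ.even_finrank⟩
  · obtain ⟨k, rfl⟩ : ∃ k, r = k + 2 := ⟨r - 2, by omega⟩
    have := hφ.finrank_le
    omega
end

section
/- Let V be an n-dimensional complex Hermitian vector space and φ a complex 1-fold vector cross product on V (a 2-form with ‖ι_e φ‖ = 1 for every unit vector e). Then n is even. -/
/-!
The 2-form `φ` is an alternating bilinear form `B x y = φ (x, y)`, and `ι_e φ = B e`. The norm
condition forces `B e ≠ 0` for every unit vector `e`, so `B` is nondegenerate. In a basis, `B` is
a skew-symmetric matrix `M` with `det M ≠ 0`; but `det M = det Mᵀ = det (-M) = (-1)ⁿ det M`,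
so `n` is even.
-/

open Module

open Matrix in
theorem Matrix.det_eq_zero_of_transpose_eq_neg {ι R : Type*} [Fintype ι] [DecidableEq ι]
    [CommRing R] [IsAddTorsionFree R] {A : Matrix ι ι R} (hA : Aᵀ = -A)
    (hodd : Odd (Fintype.card ι)) : A.det = 0 := by
  rw [← neg_eq_self]
  calc -A.det = (-A).det := by rw [det_neg, hodd.neg_one_pow, neg_one_mul]
    _ = A.det := by rw [← hA, det_transpose]

open Matrix in
theorem LinearMap.IsAlt.even_finrank_of_separatingLeft {R M : Type*} [CommRing R] [IsDomain R]
    [IsAddTorsionFree R] [AddCommGroup M] [Module R M] [Module.Free R M] [Module.Finite R M]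
    {B : M →ₗ[R] M →ₗ[R] R} (hB : B.IsAlt) (hsep : B.SeparatingLeft) : Even (finrank R M) := by
  let b := finBasis R M
  have hskew : (toMatrix₂ b b B)ᵀ = -toMatrix₂ b b B := by
    ext i j
    simp only [Matrix.transpose_apply, Matrix.neg_apply, toMatrix₂_apply, hB.neg]
  by_contra hodd
  refine (separatingLeft_iff_det_ne_zero b).mp hsep ?_
  exact Matrix.det_eq_zero_of_transpose_eq_neg hskew
    (by simpa using Nat.not_even_iff_odd.mp hodd)

namespace AlternatingMap

variable {R M N : Type*} [CommSemiring R] [AddCommMonoid M] [Module R M] [AddCommMonoid N]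
  [Module R N]

def toBilin (φ : M [⋀^Fin 2]→ₗ[R] N) : M →ₗ[R] M →ₗ[R] N :=
  LinearMap.mk₂ R (fun x y => φ ![x, y])
    (fun x x' y => φ.map_vecCons_add ![y] x x')
    (fun c x y => φ.map_vecCons_smul ![y] c x)
    (fun x y y' => (φ.curryLeft x).map_vecCons_add ![] y y')
    (fun c x y => (φ.curryLeft x).map_vecCons_smul ![] c y)

@[simp]
theorem toBilin_apply (φ : M [⋀^Fin 2]→ₗ[R] N) (x y : M) : φ.toBilin x y = φ ![x, y] :=
  rfl

theorem isAlt_toBilin (φ : M [⋀^Fin 2]→ₗ[R] N) : φ.toBilin.IsAlt :=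
  fun x => φ.map_eq_zero_of_eq ![x, x] (i := 0) (j := 1) rfl Fin.zero_ne_one

end AlternatingMap

section

variable {V : Type*} [NormedAddCommGroup V] [InnerProductSpace ℂ V] [FiniteDimensional ℂ V]

theorem contraction_apply_fin_one (φ : V [⋀^Fin (1 + 1)]→ₗ[ℂ] ℂ) (e y : V) :
    contraction φ (fun _ => e) y = φ ![e, y] := by
  change φ (Function.update (Fin.snoc (fun _ => e) 0) (Fin.last 1) y) = _
  rw [Fin.update_snoc_last]
  congr 1
  ext i
  fin_cases i <;> rfl

theorem separatingLeft_toBilin_of_norm_contraction (φ : V [⋀^Fin (1 + 1)]→ₗ[ℂ] ℂ)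
    (hφ : ∀ e : V, ‖e‖ = 1 → ‖contraction φ (fun _ => e)‖ = 1) : φ.toBilin.SeparatingLeft := by
  intro x hx
  by_contra hx0
  have hzero : contraction φ (fun _ => (‖x‖⁻¹ : ℂ) • x) = 0 := by
    ext y
    rw [contraction_apply_fin_one, ← AlternatingMap.toBilin_apply, map_smul,
      LinearMap.smul_apply, hx, smul_zero, zero_apply]
  simpa [hzero] using hφ _ (norm_smul_inv_norm (𝕜 := ℂ) hx0)

end

/-- If an `n`-dimensional complex Hermitian vector space carries a complex `1`-fold
vector cross product (a `2`-form `φ` with `‖ι_e φ‖ = 1` for every unit vector `e`),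
then `n` is even. -/
theorem stmt_7 (n : ℕ)
    (V : Type*) [NormedAddCommGroup V] [InnerProductSpace ℂ V] [FiniteDimensional ℂ V]
    (hn : finrank ℂ V = n)
    (φ : V [⋀^Fin (1 + 1)]→ₗ[ℂ] ℂ)
    (hφ : ∀ e : V, ‖e‖ = 1 → ‖contraction φ (fun _ => e)‖ = 1) :
    Even n :=
  hn ▸ φ.isAlt_toBilin.even_finrank_of_separatingLeft
    (separatingLeft_toBilin_of_norm_contraction φ hφ)
end
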